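/- Let H₁ and H₂ be finite simple graphs. Then the signature number of their direct product satisfies s(H₁ × H₂) = s(H₁) · s(H₂). -/

import Mathlib

/-!
A vertex `(x, y)` of `H₁ × H₂` is a common neighbour of `T` exactly when `x` is a common
neighbour of the first projection of `T` and `y` one of the second, so
`S(T) = S(π₁ T) × S(π₂ T)`; conversely `S(T₁ × T₂) = S(T₁) × S(T₂)`. Hence the nonempty
signature sets of the product are exactly the products of nonempty signature sets of the
factors, and a product of nonempty sets determines both factors.
-/

/-- The signature set `S(T)` of a set `T` of vertices of `H`: the set of common
neighbors of all vertices of `T`. -/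
def sigSet {V : Type} (H : SimpleGraph V) (T : Set V) : Set V :=
  ⋂ t ∈ T, H.neighborSet t

/-- The family `𝒮(H)` of all nonempty signature sets of nonempty vertex sets. -/
def sigFamily {V : Type} (H : SimpleGraph V) : Set (Set V) :=
  {S | S.Nonempty ∧ ∃ T : Set V, T.Nonempty ∧ sigSet H T = S}

/-- The signature number `s(H)`, i.e. the cardinality of `𝒮(H)`. -/
noncomputable def sigNum {V : Type} (H : SimpleGraph V) : ℕ := (sigFamily H).ncard

/-- The direct (tensor) product of two simple graphs. -/
def tensorProd {V₁ V₂ : Type} (H₁ : SimpleGraph V₁) (H₂ : SimpleGraph V₂) :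
    SimpleGraph (V₁ × V₂) where
  Adj x y := H₁.Adj x.1 y.1 ∧ H₂.Adj x.2 y.2
  symm := ⟨fun _ _ h => ⟨h.1.symm, h.2.symm⟩⟩
  loopless := ⟨fun _ h => h.1.ne rfl⟩

theorem Set.injOn_prod_of_nonempty {α β : Type*} :
    Set.InjOn (fun p : Set α × Set β => p.1 ×ˢ p.2) {p | p.1.Nonempty ∧ p.2.Nonempty} := by
  rintro ⟨S₁, S₂⟩ ⟨hS₁, hS₂⟩ ⟨_, _⟩ - h
  obtain ⟨rfl, rfl⟩ := (Set.prod_eq_prod_iff_of_nonempty (hS₁.prod hS₂)).mp h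
  rfl

section Signature

variable {V V₁ V₂ : Type}

@[simp]
theorem mem_sigSet (H : SimpleGraph V) (T : Set V) (x : V) :
    x ∈ sigSet H T ↔ ∀ t ∈ T, H.Adj t x := by
  simp [sigSet]

variable (H₁ : SimpleGraph V₁) (H₂ : SimpleGraph V₂)

theorem sigSet_tensorProd (T : Set (V₁ × V₂)) :
    sigSet (tensorProd H₁ H₂) T = sigSet H₁ (Prod.fst '' T) ×ˢ sigSet H₂ (Prod.snd '' T) := by
  ext ⟨x, y⟩
  simp only [Set.mem_prod, mem_sigSet, Set.forall_mem_image]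
  exact forall₂_and

theorem sigSet_tensorProd_prod {T₁ : Set V₁} {T₂ : Set V₂} (hT₁ : T₁.Nonempty)
    (hT₂ : T₂.Nonempty) :
    sigSet (tensorProd H₁ H₂) (T₁ ×ˢ T₂) = sigSet H₁ T₁ ×ˢ sigSet H₂ T₂ := by
  rw [sigSet_tensorProd, Set.fst_image_prod _ hT₂, Set.snd_image_prod hT₁]

theorem sigFamily_tensorProd :
    sigFamily (tensorProd H₁ H₂) =
      (fun p : Set V₁ × Set V₂ => p.1 ×ˢ p.2) '' (sigFamily H₁ ×ˢ sigFamily H₂) := by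
  ext S
  constructor
  · rintro ⟨hS, T, hT, rfl⟩
    rw [sigSet_tensorProd, Set.prod_nonempty_iff] at hS
    exact ⟨(sigSet H₁ (Prod.fst '' T), sigSet H₂ (Prod.snd '' T)),
      ⟨⟨hS.1, _, hT.image _, rfl⟩, ⟨hS.2, _, hT.image _, rfl⟩⟩, (sigSet_tensorProd H₁ H₂ T).symm⟩
  · rintro ⟨⟨_, _⟩, ⟨⟨hS₁, T₁, hT₁, rfl⟩, ⟨hS₂, T₂, hT₂, rfl⟩⟩, rfl⟩
    exact ⟨hS₁.prod hS₂, T₁ ×ˢ T₂, hT₁.prod hT₂, sigSet_tensorProd_prod H₁ H₂ hT₁ hT₂⟩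

end Signature

theorem stmt_18_general {V₁ V₂ : Type}
    (H₁ : SimpleGraph V₁) (H₂ : SimpleGraph V₂) :
    sigNum (tensorProd H₁ H₂) = sigNum H₁ * sigNum H₂ := by
  have hinj : Set.InjOn (fun p : Set V₁ × Set V₂ => p.1 ×ˢ p.2) (sigFamily H₁ ×ˢ sigFamily H₂) :=
    Set.injOn_prod_of_nonempty.mono fun _ ⟨h₁, h₂⟩ => And.intro h₁.1 h₂.1
  rw [sigNum, sigFamily_tensorProd, hinj.ncard_image, Set.ncard_prod, sigNum, sigNum]

/-- `s(H₁ × H₂) = s(H₁) · s(H₂)` for finite simple graphs. -/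
theorem stmt_18 {V₁ V₂ : Type} [Fintype V₁] [Fintype V₂]
    (H₁ : SimpleGraph V₁) (H₂ : SimpleGraph V₂) :
    sigNum (tensorProd H₁ H₂) = sigNum H₁ * sigNum H₂ :=
  stmt_18_general H₁ H₂
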